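/- Let H₁, H₂ be separable complex Hilbert spaces and (X, μ) = (X₁ × X₂, μ₁ ⊗ μ₂) the product of measure spaces with σ-finite positive measures. For each k ∈ ℕ let f_k : X₁ → H₁ and g_k : X₂ → H₂ be Bessel mappings with Bessel bounds B_k and B'_k respectively, and assume B := (∑_k B_k)·(∑_l B'_l) < ∞. Assume moreover that for μ-a.e. (x₁,x₂) the series F(x₁,x₂) := ∑_k f_k(x₁) ⊗ g_k(x₂) converges weakly in H₁ ⊗ H₂. Then F is a Bessel mapping for H₁ ⊗ H₂ with respect to (X, μ) with Bessel bound B. -/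

import Mathlib

/-!
Each simple-tensor map `x ↦ f_k(x₁) ⊗ g_k(x₂)` is Bessel with bound `B_k B'_k`. For fixed `x₁`,
`⟨h, f_k(x₁) ⊗ ·⟩` is represented by a vector `u(x₁) ∈ H₂`, so the Bessel inequality of `g_k`
bounds the inner integral by `B'_k ‖u(x₁)‖²`. Expanding `‖u(x₁)‖²` in a Hilbert basis `(e_j)`
of `H₂` and applying the Bessel inequality of `f_k` to each `⟨h, · ⊗ e_j⟩` leaves
`B_k B'_k ∑_{i,j} |⟨h, e_i ⊗ e_j⟩|² ≤ B_k B'_k ‖h‖²`, since the `e_i ⊗ e_j` are orthonormal.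

For the series, Fatou's lemma along the partial sums gives Minkowski's inequality
`‖⟨h, F⟩‖_{L²} ≤ ∑_k ‖⟨h, f_k ⊗ g_k⟩‖_{L²}`, and Cauchy–Schwarz with
`‖⟨h, f_k ⊗ g_k⟩‖²_{L²} ≤ B_k B'_k ‖h‖²` bounds the square of the right side by `B ‖h‖²`.
-/

open MeasureTheory ENNReal

noncomputable section

namespace ContFrame

variable {X : Type*} {H : Type*}

/-- The paper's inner product `⟨f, g⟩`: linear in the first argument and
conjugate-linear in the second (Mathlib's `inner` is conjugate-linear in the first). -/
def pinner [NormedAddCommGroup H] [InnerProductSpace ℂ H] (f g : H) : ℂ :=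
  @inner ℂ _ _ g f

/-- `∫_X |⟨f, F x⟩|² dμ(x)`, as a lower integral. -/
def frameInt [MeasurableSpace X] [NormedAddCommGroup H] [InnerProductSpace ℂ H]
    (μ : Measure X) (F : X → H) (f : H) : ℝ≥0∞ :=
  ∫⁻ x, (‖pinner f (F x)‖₊ : ℝ≥0∞) ^ 2 ∂μ

/-- `F` is weakly measurable: `x ↦ ⟨f, F x⟩` is μ-measurable for every `f`. -/
def WeaklyMeasurable [MeasurableSpace X] [NormedAddCommGroup H] [InnerProductSpace ℂ H]
    (μ : Measure X) (F : X → H) : Prop :=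
  ∀ f : H, AEMeasurable (fun x => pinner f (F x)) μ

/-- `F` is a Bessel mapping for `H` w.r.t. `(X, μ)` with Bessel bound `B < ∞`. -/
def IsBesselMapping [MeasurableSpace X] [NormedAddCommGroup H] [InnerProductSpace ℂ H]
    (μ : Measure X) (F : X → H) (B : ℝ≥0∞) : Prop :=
  B < ⊤ ∧ WeaklyMeasurable μ F ∧
    ∀ f : H, frameInt μ F f ≤ B * (‖f‖₊ : ℝ≥0∞) ^ 2

/-- `F` is a continuous frame for `H` w.r.t. `(X, μ)` with frame bounds `0 < A ≤ B < ∞`: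
`A ‖f‖² ≤ ∫_X |⟨f, F x⟩|² dμ(x) ≤ B ‖f‖²` for all `f ∈ H`. -/
def IsContinuousFrame [MeasurableSpace X] [NormedAddCommGroup H] [InnerProductSpace ℂ H]
    (μ : Measure X) (F : X → H) (A B : ℝ≥0∞) : Prop :=
  0 < A ∧ A ≤ B ∧ B < ⊤ ∧ WeaklyMeasurable μ F ∧
    ∀ f : H, A * (‖f‖₊ : ℝ≥0∞) ^ 2 ≤ frameInt μ F f ∧
      frameInt μ F f ≤ B * (‖f‖₊ : ℝ≥0∞) ^ 2

/-- A realization of the Hilbert tensor product `H = H₁ ⊗ H₂`: a bilinear map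
`tmul` whose simple tensors satisfy `⟪a⊗b, c⊗d⟫ = ⟪a,c⟫⟪b,d⟫` and span a dense subspace. -/
structure HilbertTensorProduct (H₁ H₂ H : Type*)
    [NormedAddCommGroup H₁] [InnerProductSpace ℂ H₁]
    [NormedAddCommGroup H₂] [InnerProductSpace ℂ H₂]
    [NormedAddCommGroup H] [InnerProductSpace ℂ H] where
  tmul : H₁ →ₗ[ℂ] H₂ →ₗ[ℂ] H
  inner_tmul : ∀ (a c : H₁) (b d : H₂),
    (inner ℂ (tmul a b) (tmul c d) : ℂ) = (inner ℂ a c : ℂ) * (inner ℂ b d : ℂ)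
  dense_span : Dense (↑(Submodule.span ℂ {z : H | ∃ a b, z = tmul a b}) : Set H)

open Filter

theorem _root_.ENNReal.tsum_sq_le_tsum_mul_tsum_of_sq_le_mul {ι : Type*} {r f g : ι → ℝ≥0∞}
    (h : ∀ i, r i ^ 2 ≤ f i * g i) : (∑' i, r i) ^ 2 ≤ (∑' i, f i) * ∑' i, g i := by
  let _ : MeasurableSpace ι := ⊤
  have hsqrt_sq : ∀ x : ℝ≥0∞, (x ^ (1 / 2 : ℝ)) ^ (2 : ℝ) = x := fun x => by
    rw [← ENNReal.rpow_mul]; norm_num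
  have hr : ∀ i, r i ≤ f i ^ (1 / 2 : ℝ) * g i ^ (1 / 2 : ℝ) := fun i => by
    calc r i = (r i ^ 2) ^ (1 / 2 : ℝ) := by
          simpa using (ENNReal.pow_rpow_inv_natCast two_ne_zero (r i)).symm
      _ ≤ (f i * g i) ^ (1 / 2 : ℝ) := ENNReal.rpow_le_rpow (h i) (by norm_num)
      _ = f i ^ (1 / 2 : ℝ) * g i ^ (1 / 2 : ℝ) := ENNReal.mul_rpow_of_nonneg _ _ (by norm_num)
  have holder := ENNReal.lintegral_mul_le_Lp_mul_Lq Measure.count .two_two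
    (measurable_from_top (f := fun i => f i ^ (1 / 2 : ℝ))).aemeasurable
    (measurable_from_top (f := fun i => g i ^ (1 / 2 : ℝ))).aemeasurable
  simp only [Pi.mul_apply, lintegral_count, hsqrt_sq] at holder
  calc (∑' i, r i) ^ 2
      ≤ ((∑' i, f i) ^ (1 / 2 : ℝ) * (∑' i, g i) ^ (1 / 2 : ℝ)) ^ (2 : ℝ) := by
        rw [← ENNReal.rpow_natCast]
        exact ENNReal.rpow_le_rpow ((ENNReal.tsum_le_tsum hr).trans holder) (by norm_num)
    _ = (∑' i, f i) * ∑' i, g i := by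
        rw [ENNReal.mul_rpow_of_nonneg _ _ (by norm_num), hsqrt_sq, hsqrt_sq]

section InnerProductSpace

variable {𝕜 E ι : Type*} [RCLike 𝕜] [NormedAddCommGroup E] [InnerProductSpace 𝕜 E]

theorem _root_.Orthonormal.tsum_enorm_inner_sq_le {v : ι → E} (hv : Orthonormal 𝕜 v) (x : E) :
    ∑' i, ‖(inner 𝕜 (v i) x : 𝕜)‖ₑ ^ 2 ≤ ‖x‖ₑ ^ 2 := by
  simp only [← ofReal_norm, ← ENNReal.ofReal_pow (norm_nonneg _)]
  rw [← ENNReal.ofReal_tsum_of_nonneg (fun _ => by positivity) (hv.inner_products_summable x)]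
  exact ENNReal.ofReal_le_ofReal (hv.tsum_inner_products_le x)

theorem _root_.HilbertBasis.tsum_enorm_inner_sq (b : HilbertBasis ι 𝕜 E) (x : E) :
    ∑' i, ‖(inner 𝕜 (b i) x : 𝕜)‖ₑ ^ 2 = ‖x‖ₑ ^ 2 := by
  have h := lp.hasSum_norm (p := 2) (by norm_num) (b.repr x)
  simp only [HilbertBasis.repr_apply_apply, LinearIsometryEquiv.norm_map, ENNReal.toReal_ofNat,
    Real.rpow_two] at h
  simp only [← ofReal_norm, ← ENNReal.ofReal_pow (norm_nonneg _)]
  rw [← ENNReal.ofReal_tsum_of_nonneg (fun _ => by positivity) h.summable, h.tsum_eq]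

theorem _root_.Orthonormal.countable [TopologicalSpace.SeparableSpace E] {v : ι → E}
    (hv : Orthonormal 𝕜 v) : Countable ι := by
  refine Pairwise.countable_of_isOpen_disjoint (s := fun i => Metric.ball (v i) (1 / 2))
    (fun i j hij => Metric.ball_disjoint_ball ?_) (fun _ => Metric.isOpen_ball)
    (fun _ => Metric.nonempty_ball.2 (by norm_num))
  have hsq : ‖v i - v j‖ ^ 2 = 2 := by
    rw [@norm_sub_sq 𝕜, hv.1 i, hv.1 j, hv.2 hij]
    norm_num
  rw [dist_eq_norm]
  nlinarith [norm_nonneg (v i - v j)]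

end InnerProductSpace

theorem _root_.MeasureTheory.eLpNorm_le_tsum_of_ae_hasSum {α E : Type*} [MeasurableSpace α]
    {μ : Measure α} [NormedAddCommGroup E] {p : ℝ≥0∞} (hp : 1 ≤ p) {f : ℕ → α → E} {g : α → E}
    (hf : ∀ k, AEStronglyMeasurable (f k) μ) (hg : ∀ᵐ x ∂μ, HasSum (fun k => f k x) (g x)) :
    eLpNorm g p μ ≤ ∑' k, eLpNorm (f k) p μ := by
  refine (Lp.eLpNorm_lim_le_liminf_eLpNorm (f := fun n => ∑ k ∈ Finset.range n, f k)
    (fun n => ?_) g ?_).trans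
    (liminf_le_of_frequently_le' (Frequently.of_forall fun n => ?_))
  · exact Finset.aestronglyMeasurable_sum _ fun k _ => hf k
  · filter_upwards [hg] with x hx
    simpa [Finset.sum_apply] using hx.tendsto_sum_nat
  · exact (eLpNorm_sum_le (fun k _ => hf k) hp).trans (ENNReal.sum_le_tsum _)

section Bessel

variable {E : Type*} [MeasurableSpace X] {μ : Measure X}
  [NormedAddCommGroup E] [InnerProductSpace ℂ E] [NormedAddCommGroup H] [InnerProductSpace ℂ H]

theorem frameInt_eq_eLpNorm_sq (G : X → H) (h : H) :
    frameInt μ G h = eLpNorm (fun x => pinner h (G x)) 2 μ ^ 2 := by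
  simpa [frameInt, enorm_eq_nnnorm] using (eLpNorm_nnreal_pow_eq_lintegral (μ := μ)
    (f := fun x => pinner h (G x)) (p := 2) two_ne_zero).symm

theorem exists_pinner_apply_eq [CompleteSpace E] (T : E →L[ℂ] H) (h : H) :
    ∃ u : E, ∀ y, pinner h (T y) = pinner u y :=
  ⟨(InnerProductSpace.toDual ℂ E).symm ((innerSL ℂ h).comp T), fun y => by
    rw [pinner, pinner, ← inner_conj_symm y, InnerProductSpace.toDual_symm_apply]
    simp⟩

theorem WeaklyMeasurable.clm_comp [CompleteSpace E] {g : X → E} (hg : WeaklyMeasurable μ g)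
    (T : E →L[ℂ] H) : WeaklyMeasurable μ (fun x => T (g x)) := fun h => by
  obtain ⟨u, hu⟩ := exists_pinner_apply_eq T h
  simpa only [hu] using hg u

theorem IsBesselMapping.frameInt_clm_comp_le [CompleteSpace E] {ι : Type*} {g : X → E}
    {B : ℝ≥0∞} (hg : IsBesselMapping μ g B) (T : E →L[ℂ] H) (e : HilbertBasis ι ℂ E) (h : H) :
    frameInt μ (fun x => T (g x)) h ≤ B * ∑' j, ‖pinner h (T (e j))‖ₑ ^ 2 := by
  obtain ⟨u, hu⟩ := exists_pinner_apply_eq T h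
  calc frameInt μ (fun x => T (g x)) h = frameInt μ g u := by simp only [frameInt, hu]
    _ ≤ B * ‖u‖ₑ ^ 2 := hg.2.2 u
    _ = B * ∑' j, ‖pinner h (T (e j))‖ₑ ^ 2 := by
        simp only [hu, ← e.tsum_enorm_inner_sq u]
        rfl

theorem WeaklyMeasurable.of_dense_span {G : X → H} {s : Set H}
    (hs : Dense (Submodule.span ℂ s : Set H))
    (hG : ∀ z ∈ s, AEMeasurable (fun x => pinner z (G x)) μ) : WeaklyMeasurable μ G := by
  have hspan : ∀ z ∈ Submodule.span ℂ s, AEMeasurable (fun x => pinner z (G x)) μ := by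
    intro z hz
    induction hz using Submodule.span_induction with
    | mem z hz => exact hG z hz
    | zero => simp only [pinner, inner_zero_right]; exact aemeasurable_const
    | add z w _ _ hz hw => simp only [pinner, inner_add_right]; exact hz.add hw
    | smul c z _ hz => simp only [pinner, inner_smul_right]; exact hz.const_mul c
  intro h
  obtain ⟨u, hu, hlim⟩ := mem_closure_iff_seq_limit.mp (hs h)
  exact aemeasurable_of_tendsto_metrizable_ae atTop (fun n => hspan (u n) (hu n))
    (ae_of_all _ fun x => tendsto_const_nhds.inner hlim)

theorem WeaklyMeasurable.of_ae_hasSum {T : ℕ → X → H} {G : X → H}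
    (hT : ∀ k, WeaklyMeasurable μ (T k))
    (hG : ∀ᵐ x ∂μ, ∀ h, HasSum (fun k => pinner h (T k x)) (pinner h (G x))) :
    WeaklyMeasurable μ G := fun h =>
  aemeasurable_of_tendsto_metrizable_ae atTop
    (f := fun n x => ∑ k ∈ Finset.range n, pinner h (T k x))
    (fun n => Finset.aemeasurable_fun_sum _ fun k _ => hT k h)
    (by filter_upwards [hG] with x hx using (hx h).tendsto_sum_nat)

theorem IsBesselMapping.of_ae_hasSum {T : ℕ → X → H} {G : X → H} {a b : ℕ → ℝ≥0∞}
    (hT : ∀ k, IsBesselMapping μ (T k) (a k * b k)) (hab : (∑' k, a k) * (∑' k, b k) < ⊤)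
    (hG : ∀ᵐ x ∂μ, ∀ h, HasSum (fun k => pinner h (T k x)) (pinner h (G x))) :
    IsBesselMapping μ G ((∑' k, a k) * (∑' k, b k)) := by
  refine ⟨hab, .of_ae_hasSum (fun k => (hT k).2.1) hG, fun h => ?_⟩
  have hminkowski := eLpNorm_le_tsum_of_ae_hasSum one_le_two
    (fun k => ((hT k).2.1 h).aestronglyMeasurable) (hG.mono fun x hx => hx h)
  calc frameInt μ G h = eLpNorm (fun x => pinner h (G x)) 2 μ ^ 2 := frameInt_eq_eLpNorm_sq G h
    _ ≤ (∑' k, eLpNorm (fun x => pinner h (T k x)) 2 μ) ^ 2 :=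
        pow_le_pow_left₀ zero_le hminkowski 2
    _ ≤ (∑' k, a k) * ∑' k, b k * ‖h‖ₑ ^ 2 :=
        ENNReal.tsum_sq_le_tsum_mul_tsum_of_sq_le_mul fun k => by
          rw [← frameInt_eq_eLpNorm_sq, ← mul_assoc]
          exact (hT k).2.2 h
    _ = (∑' k, a k) * (∑' k, b k) * ‖h‖ₑ ^ 2 := by rw [ENNReal.tsum_mul_right, mul_assoc]

end Bessel

namespace HilbertTensorProduct

variable {H₁ H₂ : Type*} [NormedAddCommGroup H₁] [InnerProductSpace ℂ H₁]
  [NormedAddCommGroup H₂] [InnerProductSpace ℂ H₂] [NormedAddCommGroup H] [InnerProductSpace ℂ H]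
  (tp : HilbertTensorProduct H₁ H₂ H)

theorem norm_tmul (a : H₁) (b : H₂) : ‖tp.tmul a b‖ = ‖a‖ * ‖b‖ := by
  have h := tp.inner_tmul a a b b
  simp only [inner_self_eq_norm_sq_to_K] at h
  rw [← pow_left_inj₀ (norm_nonneg _) (by positivity) two_ne_zero, mul_pow]
  exact_mod_cast h

def tmulL : H₁ →L[ℂ] H₂ →L[ℂ] H :=
  tp.tmul.mkContinuous₂ 1 fun a b => by rw [norm_tmul, one_mul]

theorem orthonormal_tmul {ι κ : Type*} {v : ι → H₁} {w : κ → H₂} (hv : Orthonormal ℂ v)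
    (hw : Orthonormal ℂ w) : Orthonormal ℂ (fun p : ι × κ => tp.tmul (v p.1) (w p.2)) := by
  classical
  rw [orthonormal_iff_ite] at hv hw ⊢
  intro p q
  rw [tp.inner_tmul, hv, hw]
  by_cases h₁ : p.1 = q.1 <;> by_cases h₂ : p.2 = q.2 <;> simp [Prod.ext_iff, h₁, h₂]

end HilbertTensorProduct

section Tensor

variable {X₁ X₂ H₁ H₂ : Type*} [MeasurableSpace X₁] [MeasurableSpace X₂]
  {μ₁ : Measure X₁} {μ₂ : Measure X₂}
  [NormedAddCommGroup H₁] [InnerProductSpace ℂ H₁] [NormedAddCommGroup H₂] [InnerProductSpace ℂ H₂]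
  [NormedAddCommGroup H] [InnerProductSpace ℂ H]
  (tp : HilbertTensorProduct H₁ H₂ H) {f : X₁ → H₁} {g : X₂ → H₂}

theorem WeaklyMeasurable.tmul (hf : WeaklyMeasurable μ₁ f)
    (hg : WeaklyMeasurable μ₂ g) :
    WeaklyMeasurable (μ₁.prod μ₂) (fun x => tp.tmul (f x.1) (g x.2)) := by
  refine .of_dense_span tp.dense_span ?_
  rintro _ ⟨a, b, rfl⟩
  simp only [pinner, tp.inner_tmul]
  exact ((hf a).comp_quasiMeasurePreserving Measure.quasiMeasurePreserving_fst).mul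
    ((hg b).comp_quasiMeasurePreserving Measure.quasiMeasurePreserving_snd)

theorem IsBesselMapping.tmul [CompleteSpace H₁] [CompleteSpace H₂]
    [TopologicalSpace.SeparableSpace H₂] {B₁ B₂ : ℝ≥0∞} (hf : IsBesselMapping μ₁ f B₁)
    (hg : IsBesselMapping μ₂ g B₂) :
    IsBesselMapping (μ₁.prod μ₂) (fun x => tp.tmul (f x.1) (g x.2)) (B₁ * B₂) := by
  refine ⟨ENNReal.mul_lt_top hf.1 hg.1, hf.2.1.tmul tp hg.2.1, fun h => ?_⟩
  obtain ⟨s₁, e₁, -⟩ := exists_hilbertBasis ℂ H₁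
  obtain ⟨s₂, e₂, -⟩ := exists_hilbertBasis ℂ H₂
  -- countability of the basis of `H₂` lets `∫⁻` commute with `∑'` over it below
  have : Countable s₂ := e₂.orthonormal.countable
  calc frameInt (μ₁.prod μ₂) (fun x => tp.tmul (f x.1) (g x.2)) h
      ≤ ∫⁻ x₁, frameInt μ₂ (fun x₂ => tp.tmulL (f x₁) (g x₂)) h ∂μ₁ := lintegral_prod_le _
    _ ≤ ∫⁻ x₁, B₂ * ∑' j, ‖pinner h (tp.tmul (f x₁) (e₂ j))‖ₑ ^ 2 ∂μ₁ :=
        lintegral_mono fun x₁ => hg.frameInt_clm_comp_le (tp.tmulL (f x₁)) e₂ h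
    _ = B₂ * ∑' j, frameInt μ₁ (fun x₁ => tp.tmulL.flip (e₂ j) (f x₁)) h := by
        rw [lintegral_const_mul' _ _ hg.1.ne]
        exact congrArg _ (lintegral_tsum fun j =>
          (hf.2.1.clm_comp (tp.tmulL.flip (e₂ j)) h).enorm.pow_const 2)
    _ ≤ B₂ * ∑' j, B₁ * ∑' i, ‖pinner h (tp.tmul (e₁ i) (e₂ j))‖ₑ ^ 2 := by
        gcongr with j
        exact hf.frameInt_clm_comp_le _ e₁ h
    _ = B₁ * B₂ * ∑' p : s₁ × s₂, ‖inner ℂ (tp.tmul (e₁ p.1) (e₂ p.2)) h‖ₑ ^ 2 := by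
        rw [ENNReal.tsum_mul_left, ENNReal.tsum_prod', ENNReal.tsum_comm, mul_left_comm, mul_assoc]
        rfl
    _ ≤ B₁ * B₂ * ‖h‖ₑ ^ 2 := by
        gcongr
        exact (tp.orthonormal_tmul e₁.orthonormal e₂.orthonormal).tsum_enorm_inner_sq_le h

end Tensor

theorem nonsimple_tensor_isBessel_general
    {X₁ X₂ : Type*} [MeasurableSpace X₁] [MeasurableSpace X₂]
    {H₁ H₂ H : Type*}
    [NormedAddCommGroup H₁] [InnerProductSpace ℂ H₁] [CompleteSpace H₁]
    [NormedAddCommGroup H₂] [InnerProductSpace ℂ H₂] [CompleteSpace H₂]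
      [TopologicalSpace.SeparableSpace H₂]
    [NormedAddCommGroup H] [InnerProductSpace ℂ H]
    (μ₁ : Measure X₁) (μ₂ : Measure X₂)
    (tp : HilbertTensorProduct H₁ H₂ H)
    (f : ℕ → X₁ → H₁) (g : ℕ → X₂ → H₂) (Bf Bg : ℕ → ℝ≥0∞)
    (hf : ∀ k, IsBesselMapping μ₁ (f k) (Bf k))
    (hg : ∀ k, IsBesselMapping μ₂ (g k) (Bg k))
    (hB : (∑' k, Bf k) * (∑' l, Bg l) < ⊤)
    (F : X₁ × X₂ → H)
    (hconv : ∀ᵐ x ∂(μ₁.prod μ₂), ∀ h : H,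
      HasSum (fun k => pinner h (tp.tmul (f k x.1) (g k x.2))) (pinner h (F x))) :
    IsBesselMapping (μ₁.prod μ₂) F ((∑' k, Bf k) * (∑' l, Bg l)) :=
  .of_ae_hasSum (fun k => (hf k).tmul tp (hg k)) hB hconv

/-- If `f_k`, `g_k` are Bessel mappings with bounds `B_k`, `B'_k`
such that `B = (∑_k B_k)(∑_l B'_l) < ∞`, and the series
`F(x₁,x₂) = ∑_k f_k(x₁) ⊗ g_k(x₂)` converges weakly a.e., then `F` is a Bessel
mapping for `H₁ ⊗ H₂` with Bessel bound `B`. -/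
theorem nonsimple_tensor_isBessel
    {X₁ X₂ : Type*} [MeasurableSpace X₁] [MeasurableSpace X₂]
    {H₁ H₂ H : Type*}
    [NormedAddCommGroup H₁] [InnerProductSpace ℂ H₁] [CompleteSpace H₁]
      [TopologicalSpace.SeparableSpace H₁]
    [NormedAddCommGroup H₂] [InnerProductSpace ℂ H₂] [CompleteSpace H₂]
      [TopologicalSpace.SeparableSpace H₂]
    [NormedAddCommGroup H] [InnerProductSpace ℂ H] [CompleteSpace H]
      [TopologicalSpace.SeparableSpace H]
    (μ₁ : Measure X₁) (μ₂ : Measure X₂) [SigmaFinite μ₁] [SigmaFinite μ₂]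
    (tp : HilbertTensorProduct H₁ H₂ H)
    (f : ℕ → X₁ → H₁) (g : ℕ → X₂ → H₂) (Bf Bg : ℕ → ℝ≥0∞)
    (hf : ∀ k, IsBesselMapping μ₁ (f k) (Bf k))
    (hg : ∀ k, IsBesselMapping μ₂ (g k) (Bg k))
    (hB : (∑' k, Bf k) * (∑' l, Bg l) < ⊤)
    (F : X₁ × X₂ → H)
    (hconv : ∀ᵐ x ∂(μ₁.prod μ₂), ∀ h : H,
      HasSum (fun k => pinner h (tp.tmul (f k x.1) (g k x.2))) (pinner h (F x))) :
    IsBesselMapping (μ₁.prod μ₂) F ((∑' k, Bf k) * (∑' l, Bg l)) :=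
  nonsimple_tensor_isBessel_general μ₁ μ₂ tp f g Bf Bg hf hg hB F hconv

end ContFrame
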